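/- Let a > 0 and define R(x) = 2|x − a| / (|x − a| + x) for x ≥ 0. Then R is a p-value for 𝒱: for every P ∈ 𝒱 and every u ∈ (0,1), P({x ≥ 0 : R(x) ≤ u}) ≤ u. Consequently R is a p-value for every Borel probability measure on ℝ concentrated on [0,∞) whose CDF is concave on [0,∞). -/
import Mathlib


open MeasureTheory Set

/-- `𝒰₀⁺`: Borel probability measures on `ℝ` concentrated on `[0,∞)` whose CDF is concave
on `[0,∞)`. -/
def U0plus : Set (Measure ℝ) :=
  {P | IsProbabilityMeasure P ∧ P (Ici (0 : ℝ)) = 1 ∧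
    ConcaveOn ℝ (Ici (0 : ℝ)) (fun x => (P (Iic x)).toReal)}

/-- `𝒱`: Borel probability measures on `ℝ` concentrated on `[0,∞)` satisfying the basic
inequality `P((a,b]) ≤ (b−a)/b` for all `0 ≤ a < b`. -/
def Vclass : Set (Measure ℝ) :=
  {P | IsProbabilityMeasure P ∧ P (Ici (0 : ℝ)) = 1 ∧
    ∀ a b : ℝ, 0 ≤ a → a < b → P (Ioc a b) ≤ ENNReal.ofReal ((b - a) / b)}

/-- Every probability measure concentrated on `[0,∞)` with concave CDF on `[0,∞)`
satisfies the basic inequality, i.e. `U0plus ⊆ Vclass`. -/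
theorem U0plus_subset_Vclass : U0plus ⊆ Vclass := by
  rintro P ⟨hprob, hP0, hconc⟩
  refine ⟨hprob, hP0, ?_⟩
  intro s b hs hsb
  have hb : 0 < b := lt_of_le_of_lt hs hsb
  set F : ℝ → ℝ := fun x => (P (Iic x)).toReal with hF
  have hne : ∀ x : ℝ, P (Iic x) ≠ ⊤ := fun x => measure_ne_top P _
  have hmono : P (Iic s) ≤ P (Iic b) := measure_mono (Iic_subset_Iic.mpr hsb.le)
  have hIoc : P (Ioc s b) = P (Iic b) - P (Iic s) := by
    rw [← Iic_sdiff_Iic, measure_diff (Iic_subset_Iic.mpr hsb.le)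
      measurableSet_Iic.nullMeasurableSet (hne s)]
  -- concavity at s = (1 - s/b)*0 + (s/b)*b
  have h1 : (0:ℝ) ∈ Ici (0:ℝ) := mem_Ici.mpr le_rfl
  have h2 : b ∈ Ici (0:ℝ) := mem_Ici.mpr hb.le
  have hw1 : (0:ℝ) ≤ 1 - s / b := by
    have : s / b ≤ 1 := by rw [div_le_one hb]; linarith
    linarith
  have hw2 : (0:ℝ) ≤ s / b := div_nonneg hs hb.le
  have hw : (1 - s / b) + s / b = 1 := by ring
  have hcc := hconc.2 h1 h2 hw1 hw2 hw
  simp only [smul_eq_mul, mul_zero, zero_add] at hcc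
  have hpt : s / b * b = s := div_mul_cancel₀ s hb.ne'
  rw [hpt] at hcc
  have hF0 : 0 ≤ F 0 := ENNReal.toReal_nonneg
  have hFb1 : F b ≤ 1 := by
    have := prob_le_one (μ := P) (s := Iic b)
    exact ENNReal.toReal_le_of_le_ofReal one_pos.le (by simpa using this)
  have hFa : (s / b) * F b ≤ F s := by nlinarith [hcc]
  have hkey : F b - F s ≤ (b - s) / b := by
    rw [div_eq_mul_inv] at hFa ⊢
    have h3 : F b - F s ≤ F b * (1 - s * b⁻¹) := by nlinarith
    have h4 : F b * (1 - s * b⁻¹) ≤ 1 * (1 - s * b⁻¹) := by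
      apply mul_le_mul_of_nonneg_right hFb1
      have : s * b⁻¹ ≤ 1 := by
        rw [← div_eq_mul_inv, div_le_one hb]; linarith
      linarith
    have : (b - s) * b⁻¹ = 1 - s * b⁻¹ := by field_simp
    nlinarith [ENNReal.toReal_nonneg (a := P (Iic s))]
  have hsub : P (Ioc s b) = ENNReal.ofReal (F b - F s) := by
    rw [hIoc]
    rw [← ENNReal.ofReal_toReal (a := P (Iic b) - P (Iic s)) (by
      exact ne_top_of_le_ne_top (hne b) tsub_le_self)]
    congr 1
    rw [ENNReal.toReal_sub_of_le hmono (hne b)]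
  rw [hsub]
  exact ENNReal.ofReal_le_ofReal hkey

/-- **Edelman's p-value.** Let `a > 0` and
`R(x) = 2|x − a| / (|x − a| + x)` for `x ≥ 0`. Then `R` is a p-value for `𝒱`:
`P({x ≥ 0 : R(x) ≤ u}) ≤ u` for every `P ∈ 𝒱` and `u ∈ (0,1)`; consequently it is a
p-value for every probability measure concentrated on `[0,∞)` with concave CDF on
`[0,∞)`. -/
theorem stmt19 (a : ℝ) (ha : 0 < a) (R : ℝ → ℝ)
    (hR : ∀ x : ℝ, 0 ≤ x → R x = 2 * |x - a| / (|x - a| + x)) :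
    (∀ P ∈ Vclass, ∀ u : ℝ, 0 < u → u < 1 →
      P {x : ℝ | 0 ≤ x ∧ R x ≤ u} ≤ ENNReal.ofReal u) ∧
    (∀ P ∈ U0plus, ∀ u : ℝ, 0 < u → u < 1 →
      P {x : ℝ | 0 ≤ x ∧ R x ≤ u} ≤ ENNReal.ofReal u) := by
  have main : ∀ P ∈ Vclass, ∀ u : ℝ, 0 < u → u < 1 →
      P {x : ℝ | 0 ≤ x ∧ R x ≤ u} ≤ ENNReal.ofReal u := by
    rintro P ⟨hprob, hP0, hineq⟩ u hu hu1
    set c := a * (2 - u) / 2 with hc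
    set d := a * (2 - u) / (2 * (1 - u)) with hd
    have hu2 : (0:ℝ) < 2 - u := by linarith
    have ht : (0:ℝ) < 1 - u := by linarith
    have hc2 : 2 * c = a * (2 - u) := by rw [hc]; field_simp
    have hd2 : 2 * (1 - u) * d = a * (2 - u) := by rw [hd]; field_simp
    have hcpos : 0 < c := by rw [hc]; positivity
    have hdpos : 0 < d := by rw [hd]; positivity
    have hcd : c ≤ d := by nlinarith
    have hdc : d - c = u * d := by nlinarith
    have hset : {x : ℝ | 0 ≤ x ∧ R x ≤ u} = Icc c d := by
      ext x
      simp only [mem_setOf_eq, mem_Icc]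
      constructor
      · rintro ⟨hx, hRx⟩
        rw [hR x hx] at hRx
        have habs2 : a - x ≤ |x - a| := by
          have := neg_abs_le (x - a); linarith
        have hden : 0 < |x - a| + x := by linarith
        have h2 : 2 * |x - a| ≤ u * (|x - a| + x) := by
          rwa [div_le_iff₀ hden] at hRx
        rcases abs_cases (x - a) with ⟨heq, hge⟩ | ⟨heq, hlt⟩
        · rw [heq] at h2
          constructor
          · nlinarith
          · nlinarith
        · rw [heq] at h2
          constructor
          · nlinarith
          · nlinarith
      · rintro ⟨hcx, hxd⟩
        have hx : 0 ≤ x := le_trans hcpos.le hcx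
        refine ⟨hx, ?_⟩
        rw [hR x hx]
        have habs2 : a - x ≤ |x - a| := by
          have := neg_abs_le (x - a); linarith
        have hden : 0 < |x - a| + x := by linarith
        rw [div_le_iff₀ hden]
        rcases abs_cases (x - a) with ⟨heq, hge⟩ | ⟨heq, hlt⟩
        · rw [heq]; nlinarith
        · rw [heq]; nlinarith
    rw [hset]
    apply ENNReal.le_of_forall_pos_le_add
    intro ε hε _
    set e : ℝ := min (c / 2) (d * ε) with he
    have hepos : 0 < e := lt_min (by linarith) (by positivity)
    have hec : e ≤ c / 2 := min_le_left _ _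
    have hed : e ≤ d * ε := min_le_right _ _
    have h0 : 0 ≤ c - e := by linarith
    have hcd' : c - e < d := by linarith
    have hsub : Icc c d ⊆ Ioc (c - e) d := fun x hx =>
      ⟨by linarith [hx.1], hx.2⟩
    calc P (Icc c d) ≤ P (Ioc (c - e) d) := measure_mono hsub
      _ ≤ ENNReal.ofReal ((d - (c - e)) / d) := hineq _ _ h0 hcd'
      _ = ENNReal.ofReal (u + e / d) := by
          congr 1
          have h5 : d - (c - e) = u * d + e := by linarith
          rw [h5, add_div, mul_div_cancel_right₀ u hdpos.ne']
      _ ≤ ENNReal.ofReal u + ε := by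
          rw [ENNReal.ofReal_add hu.le (by positivity)]
          gcongr
          have : e / d ≤ (ε : ℝ) := by
            rw [div_le_iff₀ hdpos]; linarith
          calc ENNReal.ofReal (e / d) ≤ ENNReal.ofReal (ε : ℝ) :=
                ENNReal.ofReal_le_ofReal this
            _ = ε := ENNReal.ofReal_coe_nnreal
  exact ⟨main, fun P hP => main P (U0plus_subset_Vclass hP)⟩
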